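/- arXiv:math/0505666 — 2 statements merged into one kernel-verified Lean document; each statement's English description precedes it below -/
import Mathlib

section
/- In a free group, the relation of commuting is transitive on nontrivial elements: if a, b, c are nontrivial elements of a free group with ab = ba and bc = cb, then ac = ca. -/
/-!
By Nielsen–Schreier the centralizer of `b` is a free group, and `b` is a nontrivial central
element of it. In a free group a nontrivial element commutes with at most one generator (compare
the reduced words of `z * x` and `x * z`), so a free group with nontrivial center has at most one
generator and is commutative.
-/

namespace FreeGroup

variable {α : Type*}

section Words

variable [DecidableEq α] {z : FreeGroup α} {p : α × Bool}

theorem toWord_mul_mk_singleton (h : ∀ l ∈ z.toWord.getLast?, l.1 = p.1 → l.2 = p.2) :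
    (z * mk [p]).toWord = z.toWord ++ [p] := by
  rw [toWord_mul, toWord_mk, reduce_singleton]
  exact IsReduced.reduce_eq (isReduced_toWord.append IsReduced.singleton (by simpa using h))

theorem toWord_mk_singleton_mul (h : ∀ f ∈ z.toWord.head?, p.1 = f.1 → p.2 = f.2) :
    (mk [p] * z).toWord = p :: z.toWord := by
  rw [toWord_mul, toWord_mk, reduce_singleton]
  exact IsReduced.reduce_eq (IsReduced.singleton.append isReduced_toWord (by simpa using h))

/-- Neither product cancels, so commuting forces `z.toWord ++ [p] = p :: z.toWord`. -/
theorem head?_toWord_eq_of_commute (hz : z ≠ 1) (hcomm : Commute z (mk [p]))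
    (hlast : ∀ l ∈ z.toWord.getLast?, l.1 = p.1 → l.2 = p.2)
    (hhead : ∀ f ∈ z.toWord.head?, p.1 = f.1 → p.2 = f.2) :
    z.toWord.head? = some p := by
  have hne : z.toWord ≠ [] := mt toWord_eq_nil_iff.mp hz
  have hword : z.toWord ++ [p] = p :: z.toWord := by
    rw [← toWord_mul_mk_singleton hlast, ← toWord_mk_singleton_mul hhead, hcomm.eq]
  simpa [List.head?_append_of_ne_nil _ hne] using congrArg List.head? hword

end Words

theorem commute_mk_singleton {z : FreeGroup α} {x : α} (h : Commute z (of x)) :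
    ∀ b : Bool, Commute z (mk [(x, b)])
  | true => h
  | false => h.inv_right

/-- One of `x`, `y`, say `v`, differs from the generator of the first letter of `z`; the letter
`v^{±1}` carrying the sign of the last letter of `z` then cancels against neither end of `z`, so
by `head?_toWord_eq_of_commute` it would be the first letter of `z`. -/
theorem eq_of_commute_of {z : FreeGroup α} (hz : z ≠ 1) {x y : α} (hx : Commute z (of x))
    (hy : Commute z (of y)) : x = y := by
  classical
  by_contra hxy
  have hne : z.toWord ≠ [] := mt toWord_eq_nil_iff.mp hz
  obtain ⟨f, hf⟩ := Option.ne_none_iff_exists'.mp (mt List.head?_eq_none_iff.mp hne)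
  obtain ⟨l, hl⟩ := Option.ne_none_iff_exists'.mp (mt List.getLast?_eq_none_iff.mp hne)
  obtain ⟨v, hv, hvf⟩ : ∃ v, Commute z (of v) ∧ v ≠ f.1 := by
    by_cases hxf : x = f.1
    · exact ⟨y, hy, hxf ▸ Ne.symm hxy⟩
    · exact ⟨x, hx, hxf⟩
  have := head?_toWord_eq_of_commute hz (commute_mk_singleton hv l.2)
    (by simp [hl]) (by simp [hf, hvf])
  rw [hf, Option.some_inj] at this
  exact hvf (congrArg Prod.fst this).symm

theorem commute_of_forall_commute_of {z : FreeGroup α} (hz : z ≠ 1)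
    (hcomm : ∀ x, Commute z (of x)) (a c : FreeGroup α) : Commute a c := by
  have hgen : ∀ g ∈ Set.range (of (α := α)), ∀ h ∈ Set.range (of (α := α)), g * h = h * g := by
    rintro _ ⟨x, rfl⟩ _ ⟨y, rfl⟩
    rw [eq_of_commute_of hz (hcomm x) (hcomm y)]
  have hle := Subgroup.closure_le_centralizer_centralizer (Set.range (of (α := α)))
  rw [closure_range_of] at hle
  exact Set.centralizer_centralizer_comm_of_comm hgen a (hle trivial) c (hle trivial)

end FreeGroup

theorem IsFreeGroup.commute_of_mem_center {G : Type*} [Group G] [IsFreeGroup G] {z : G}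
    (hz : z ≠ 1) (hcenter : z ∈ Subgroup.center G) (a c : G) : Commute a c := by
  let e := IsFreeGroup.toFreeGroup G
  have hcomm : ∀ x, Commute (e z) (FreeGroup.of x) := fun x => by
    simpa using (commute_map_iff e.injective).mpr
      ((Subgroup.mem_center_iff.mp hcenter (e.symm (FreeGroup.of x))).symm)
  exact (commute_map_iff e.injective).mp
    (FreeGroup.commute_of_forall_commute_of (e.map_ne_one_iff.mpr hz) hcomm (e a) (e c))

theorem free_group_commute_trans_general {F : Type*} [Group F] [IsFreeGroup F]
    {a b c : F} (hb : b ≠ 1)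
    (hab : a * b = b * a) (hbc : b * c = c * b) : a * c = c * a := by
  let C := Subgroup.centralizer ({b} : Set F)
  have hbC : b ∈ C := Subgroup.mem_centralizer_singleton_iff.mpr rfl
  have hbcenter : (⟨b, hbC⟩ : C) ∈ Subgroup.center C :=
    Subgroup.mem_center_iff.mpr fun g => Subtype.ext (Subgroup.mem_centralizer_singleton_iff.mp g.2)
  -- `C` is free by the Nielsen–Schreier instance `subgroupIsFreeOfIsFree`.
  have := IsFreeGroup.commute_of_mem_center (z := (⟨b, hbC⟩ : C)) (by simpa using hb) hbcenter
    ⟨a, Subgroup.mem_centralizer_singleton_iff.mpr hab⟩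
    ⟨c, Subgroup.mem_centralizer_singleton_iff.mpr hbc.symm⟩
  exact congrArg Subtype.val this.eq

/-- In a free group, commuting is transitive on nontrivial elements. -/
theorem free_group_commute_trans {F : Type*} [Group F] [IsFreeGroup F]
    {a b c : F} (ha : a ≠ 1) (hb : b ≠ 1) (hc : c ≠ 1)
    (hab : a * b = b * a) (hbc : b * c = c * b) : a * c = c * a :=
  free_group_commute_trans_general hb hab hbc
end

section
/- The pentagonal prism graph P₅ does not have the doubly breakable cycle property: there is no independent set D of vertices of P₅ such that every cycle of P₅ meets D at least twice. -/
open SimpleGraph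


/-- The pentagonal prism: the box product of a 5-cycle with a single edge. -/
def pentagonalPrism : SimpleGraph (Fin 5 × Fin 2) :=
  (SimpleGraph.cycleGraph 5).boxProd (SimpleGraph.pathGraph 2)

lemma pp_adj {x y : Fin 5 × Fin 2} :
    pentagonalPrism.Adj x y ↔
      ((x.1 - y.1 = 1 ∨ y.1 - x.1 = 1) ∧ x.2 = y.2) ∨
      (((x.2:ℕ) + 1 = y.2 ∨ (y.2:ℕ) + 1 = x.2) ∧ x.1 = y.1) := by
  simp [pentagonalPrism, boxProd_adj, cycleGraph_adj, pathGraph_adj]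


lemma square_lemma {V : Type*} [Fintype V] {G : SimpleGraph V} (D : Set V)
    (hcyc : ∀ (v : V) (c : G.Walk v v), c.IsCycle → 2 ≤ {x | x ∈ D ∧ x ∈ c.support}.ncard)
    {p q r s : V} (hpq : G.Adj p q) (hqr : G.Adj q r) (hrs : G.Adj r s) (hsp : G.Adj s p)
    (hpr : p ≠ r) (hqs : q ≠ s)
    (npq : ¬(p ∈ D ∧ q ∈ D)) (nqr : ¬(q ∈ D ∧ r ∈ D))
    (nrs : ¬(r ∈ D ∧ s ∈ D)) (nsp : ¬(s ∈ D ∧ p ∈ D)) :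
    (p ∈ D ∧ r ∈ D) ∨ (q ∈ D ∧ s ∈ D) := by
  have hpq' := G.ne_of_adj hpq
  have hqr' := G.ne_of_adj hqr
  have hrs' := G.ne_of_adj hrs
  have hsp' := G.ne_of_adj hsp
  set c : G.Walk p p :=
    Walk.cons hpq (Walk.cons hqr (Walk.cons hrs (Walk.cons hsp Walk.nil))) with hc
  have hcyc' : c.IsCycle := by
    simp [hc, Walk.isCycle_def, Walk.isTrail_def, Sym2.eq, Sym2.rel_iff']
    aesop
  have h2 := hcyc p c hcyc'
  have hfin : {x | x ∈ D ∧ x ∈ c.support}.Finite := Set.toFinite _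
  obtain ⟨a, ha, b, hb, hab⟩ := (Set.one_lt_ncard hfin).mp h2
  have hsup : c.support = [p, q, r, s, p] := by simp [hc]
  rw [Set.mem_setOf_eq, hsup] at ha hb
  obtain ⟨haD, ha'⟩ := ha
  obtain ⟨hbD, hb'⟩ := hb
  simp only [List.mem_cons, List.not_mem_nil, or_false] at ha' hb'
  rcases ha' with rfl|rfl|rfl|rfl|rfl <;> rcases hb' with rfl|rfl|rfl|rfl|rfl <;> tauto

lemma propcore (P0 P1 P2 P3 P4 Q0 Q1 Q2 Q3 Q4 : Prop)
  (nb0 : ¬(P0∧P1)) (nb1 : ¬(P1∧P2)) (nb2 : ¬(P2∧P3)) (nb3 : ¬(P3∧P4)) (nb4 : ¬(P4∧P0))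
  (nt0 : ¬(Q0∧Q1)) (nt1 : ¬(Q1∧Q2)) (nt2 : ¬(Q2∧Q3)) (nt3 : ¬(Q3∧Q4)) (nt4 : ¬(Q4∧Q0))
  (h0 : (P0∧Q1)∨(P1∧Q0)) (h1 : (P1∧Q2)∨(P2∧Q1)) (h2 : (P2∧Q3)∨(P3∧Q2))
  (h3 : (P3∧Q4)∨(P4∧Q3)) (h4 : (P4∧Q0)∨(P0∧Q4)) : False := by
  rcases h0 with ⟨x0,y0⟩|⟨x0,y0⟩ <;> rcases h1 with ⟨x1,y1⟩|⟨x1,y1⟩ <;>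
  rcases h2 with ⟨x2,y2⟩|⟨x2,y2⟩ <;> rcases h3 with ⟨x3,y3⟩|⟨x3,y3⟩ <;>
  rcases h4 with ⟨x4,y4⟩|⟨x4,y4⟩ <;> first | exact nb0 ⟨‹_›,‹_›⟩ | exact nb1 ⟨‹_›,‹_›⟩ | exact nb2 ⟨‹_›,‹_›⟩ | exact nb3 ⟨‹_›,‹_›⟩ | exact nb4 ⟨‹_›,‹_›⟩ | exact nt0 ⟨‹_›,‹_›⟩ | exact nt1 ⟨‹_›,‹_›⟩ | exact nt2 ⟨‹_›,‹_›⟩ | exact nt3 ⟨‹_›,‹_›⟩ | exact nt4 ⟨‹_›,‹_›⟩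

/-- The pentagonal prism does not have the doubly breakable cycle property:
no independent set of vertices meets every cycle at least twice. -/
theorem pentagonalPrism_not_DBCP :
    ¬ ∃ D : Set (Fin 5 × Fin 2),
      (∀ x ∈ D, ∀ y ∈ D, ¬ pentagonalPrism.Adj x y) ∧
      ∀ (v : Fin 5 × Fin 2) (c : pentagonalPrism.Walk v v), c.IsCycle →
        2 ≤ {x | x ∈ D ∧ x ∈ c.support}.ncard := by
  rintro ⟨D, hind, hcyc⟩
  have nb0 : ¬((((0:Fin 5),(0:Fin 2)) : Fin 5 × Fin 2) ∈ D ∧ (((1:Fin 5),(0:Fin 2)) : Fin 5 × Fin 2) ∈ D) := fun h => hind _ h.1 _ h.2 (by rw [pp_adj]; decide)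
  have nt0 : ¬((((0:Fin 5),(1:Fin 2)) : Fin 5 × Fin 2) ∈ D ∧ (((1:Fin 5),(1:Fin 2)) : Fin 5 × Fin 2) ∈ D) := fun h => hind _ h.1 _ h.2 (by rw [pp_adj]; decide)
  have nv0 : ¬((((0:Fin 5),(0:Fin 2)) : Fin 5 × Fin 2) ∈ D ∧ (((0:Fin 5),(1:Fin 2)) : Fin 5 × Fin 2) ∈ D) := fun h => hind _ h.1 _ h.2 (by rw [pp_adj]; decide)
  have nb1 : ¬((((1:Fin 5),(0:Fin 2)) : Fin 5 × Fin 2) ∈ D ∧ (((2:Fin 5),(0:Fin 2)) : Fin 5 × Fin 2) ∈ D) := fun h => hind _ h.1 _ h.2 (by rw [pp_adj]; decide)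
  have nt1 : ¬((((1:Fin 5),(1:Fin 2)) : Fin 5 × Fin 2) ∈ D ∧ (((2:Fin 5),(1:Fin 2)) : Fin 5 × Fin 2) ∈ D) := fun h => hind _ h.1 _ h.2 (by rw [pp_adj]; decide)
  have nv1 : ¬((((1:Fin 5),(0:Fin 2)) : Fin 5 × Fin 2) ∈ D ∧ (((1:Fin 5),(1:Fin 2)) : Fin 5 × Fin 2) ∈ D) := fun h => hind _ h.1 _ h.2 (by rw [pp_adj]; decide)
  have nb2 : ¬((((2:Fin 5),(0:Fin 2)) : Fin 5 × Fin 2) ∈ D ∧ (((3:Fin 5),(0:Fin 2)) : Fin 5 × Fin 2) ∈ D) := fun h => hind _ h.1 _ h.2 (by rw [pp_adj]; decide)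
  have nt2 : ¬((((2:Fin 5),(1:Fin 2)) : Fin 5 × Fin 2) ∈ D ∧ (((3:Fin 5),(1:Fin 2)) : Fin 5 × Fin 2) ∈ D) := fun h => hind _ h.1 _ h.2 (by rw [pp_adj]; decide)
  have nv2 : ¬((((2:Fin 5),(0:Fin 2)) : Fin 5 × Fin 2) ∈ D ∧ (((2:Fin 5),(1:Fin 2)) : Fin 5 × Fin 2) ∈ D) := fun h => hind _ h.1 _ h.2 (by rw [pp_adj]; decide)
  have nb3 : ¬((((3:Fin 5),(0:Fin 2)) : Fin 5 × Fin 2) ∈ D ∧ (((4:Fin 5),(0:Fin 2)) : Fin 5 × Fin 2) ∈ D) := fun h => hind _ h.1 _ h.2 (by rw [pp_adj]; decide)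
  have nt3 : ¬((((3:Fin 5),(1:Fin 2)) : Fin 5 × Fin 2) ∈ D ∧ (((4:Fin 5),(1:Fin 2)) : Fin 5 × Fin 2) ∈ D) := fun h => hind _ h.1 _ h.2 (by rw [pp_adj]; decide)
  have nv3 : ¬((((3:Fin 5),(0:Fin 2)) : Fin 5 × Fin 2) ∈ D ∧ (((3:Fin 5),(1:Fin 2)) : Fin 5 × Fin 2) ∈ D) := fun h => hind _ h.1 _ h.2 (by rw [pp_adj]; decide)
  have nb4 : ¬((((4:Fin 5),(0:Fin 2)) : Fin 5 × Fin 2) ∈ D ∧ (((0:Fin 5),(0:Fin 2)) : Fin 5 × Fin 2) ∈ D) := fun h => hind _ h.1 _ h.2 (by rw [pp_adj]; decide)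
  have nt4 : ¬((((4:Fin 5),(1:Fin 2)) : Fin 5 × Fin 2) ∈ D ∧ (((0:Fin 5),(1:Fin 2)) : Fin 5 × Fin 2) ∈ D) := fun h => hind _ h.1 _ h.2 (by rw [pp_adj]; decide)
  have nv4 : ¬((((4:Fin 5),(0:Fin 2)) : Fin 5 × Fin 2) ∈ D ∧ (((4:Fin 5),(1:Fin 2)) : Fin 5 × Fin 2) ∈ D) := fun h => hind _ h.1 _ h.2 (by rw [pp_adj]; decide)
  have h0 := square_lemma D hcyc (by rw [pp_adj]; decide : pentagonalPrism.Adj (0,0) (1,0)) (by rw [pp_adj]; decide : pentagonalPrism.Adj (1,0) (1,1)) (by rw [pp_adj]; decide : pentagonalPrism.Adj (1,1) (0,1)) (by rw [pp_adj]; decide : pentagonalPrism.Adj (0,1) (0,0)) (by decide) (by decide) nb0 (fun h => nv1.elim ⟨h.1, h.2⟩) (fun h => nt0.elim ⟨h.2, h.1⟩) (fun h => nv0.elim ⟨h.2, h.1⟩)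
  have h1 := square_lemma D hcyc (by rw [pp_adj]; decide : pentagonalPrism.Adj (1,0) (2,0)) (by rw [pp_adj]; decide : pentagonalPrism.Adj (2,0) (2,1)) (by rw [pp_adj]; decide : pentagonalPrism.Adj (2,1) (1,1)) (by rw [pp_adj]; decide : pentagonalPrism.Adj (1,1) (1,0)) (by decide) (by decide) nb1 (fun h => nv2.elim ⟨h.1, h.2⟩) (fun h => nt1.elim ⟨h.2, h.1⟩) (fun h => nv1.elim ⟨h.2, h.1⟩)
  have h2 := square_lemma D hcyc (by rw [pp_adj]; decide : pentagonalPrism.Adj (2,0) (3,0)) (by rw [pp_adj]; decide : pentagonalPrism.Adj (3,0) (3,1)) (by rw [pp_adj]; decide : pentagonalPrism.Adj (3,1) (2,1)) (by rw [pp_adj]; decide : pentagonalPrism.Adj (2,1) (2,0)) (by decide) (by decide) nb2 (fun h => nv3.elim ⟨h.1, h.2⟩) (fun h => nt2.elim ⟨h.2, h.1⟩) (fun h => nv2.elim ⟨h.2, h.1⟩)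
  have h3 := square_lemma D hcyc (by rw [pp_adj]; decide : pentagonalPrism.Adj (3,0) (4,0)) (by rw [pp_adj]; decide : pentagonalPrism.Adj (4,0) (4,1)) (by rw [pp_adj]; decide : pentagonalPrism.Adj (4,1) (3,1)) (by rw [pp_adj]; decide : pentagonalPrism.Adj (3,1) (3,0)) (by decide) (by decide) nb3 (fun h => nv4.elim ⟨h.1, h.2⟩) (fun h => nt3.elim ⟨h.2, h.1⟩) (fun h => nv3.elim ⟨h.2, h.1⟩)
  have h4 := square_lemma D hcyc (by rw [pp_adj]; decide : pentagonalPrism.Adj (4,0) (0,0)) (by rw [pp_adj]; decide : pentagonalPrism.Adj (0,0) (0,1)) (by rw [pp_adj]; decide : pentagonalPrism.Adj (0,1) (4,1)) (by rw [pp_adj]; decide : pentagonalPrism.Adj (4,1) (4,0)) (by decide) (by decide) nb4 (fun h => nv0.elim ⟨h.1, h.2⟩) (fun h => nt4.elim ⟨h.2, h.1⟩) (fun h => nv4.elim ⟨h.2, h.1⟩)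
  exact propcore _ _ _ _ _ _ _ _ _ _ nb0 nb1 nb2 nb3 nb4 nt0 nt1 nt2 nt3 nt4 h0 h1 h2 h3 h4
end
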